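/- arXiv:1506.03569 — 5 statements merged into one kernel-verified Lean document; each statement's English description precedes it below -/
import Mathlib

section
/- Let p = 2k+1 be an odd prime, H a group, B a normal subgroup of H of index p, θ : H → B an isomorphism, and let G = H*_θ be the HNN extension of H relative to θ (with associated subgroups A = H and B). Regard H as a subgroup of G. If g ∈ G is elliptic, i.e. g lies in some conjugate xHx⁻¹ of H in G, then for every left coset vH ∈ G/H either g·vH = vH or the 2k+1 cosets g^j·vH for j = −k, −k+1, …, k−1, k are pairwise distinct. -/
/-!
Conjugation by `t` maps `H` into `B ≤ H`, so every element of `G` is `t⁻ᵃ u tᵇ` with `u ∈ H`, and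
every conjugate of an element of `H` is `t⁻ᵃ d tᵃ` with `d ∈ H`. If `(t⁻ᵃ d tᵃ)ⁿ ∈ H` and `a > 0`,
conjugating by `tᵃ⁻¹` gives `t⁻¹ dⁿ t ∈ H`, so `dⁿ ∈ B` by Britton's lemma, hence `d ∈ B` when `n`
is prime to `p = [H : B]`; then `t⁻¹ d t ∈ H` and induction on `a` shows `t⁻ᵃ d tᵃ ∈ H`. Thus for
elliptic `g` and `n` prime to `p`, `gⁿ` and `g` fix the same cosets of `H`, and `i - j` is such an
`n` when `-k ≤ i, j ≤ k` and `i ≠ j`.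
-/

theorem Subgroup.mem_of_zpow_mem_of_isCoprime {G : Type*} [Group G] (N : Subgroup G) [N.Normal]
    {n : ℤ} (hn : IsCoprime n N.index) {g : G} (h : g ^ n ∈ N) : g ∈ N := by
  obtain ⟨u, v, huv⟩ := hn
  have hg : g = (g ^ n) ^ u * (g ^ N.index) ^ v := by
    rw [← zpow_natCast, ← zpow_mul, ← zpow_mul, ← zpow_add, mul_comm n, mul_comm (N.index : ℤ),
      huv, zpow_one]
  rw [hg]
  exact N.mul_mem (N.zpow_mem h u) (N.zpow_mem (N.pow_index_mem g) v)

theorem Int.isCoprime_of_natAbs_lt_prime {p : ℕ} (hp : p.Prime) {n : ℤ} (hn : n ≠ 0)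
    (hlt : n.natAbs < p) : IsCoprime n p := by
  rw [Int.isCoprime_iff_gcd_eq_one]
  exact Nat.Coprime.symm <|
    (Nat.Prime.coprime_iff_not_dvd hp).2 (Nat.not_dvd_of_pos_of_lt (Int.natAbs_pos.2 hn) hlt)

theorem inv_mul_mul_zpow {G : Type*} [Group G] (a b : G) (n : ℤ) :
    (a⁻¹ * b * a) ^ n = a⁻¹ * b ^ n * a := by
  simpa using conj_zpow (a := a⁻¹) (b := b) (i := n)

section QuotientAction

variable {G : Type*} [Group G] {K : Subgroup G}

theorem zpow_smul_mk_eq_mk_iff (g z : G) (n : ℤ) :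
    g ^ n • (z : G ⧸ K) = z ↔ (z⁻¹ * g * z) ^ n ∈ K := by
  rw [eq_comm, MulAction.Quotient.smul_mk, QuotientGroup.eq, smul_eq_mul, inv_mul_mul_zpow,
    mul_assoc]

theorem smul_eq_self_of_zpow_smul_eq_self {n : ℤ}
    (hK : ∀ w : G, ∀ x ∈ K, (w⁻¹ * x * w) ^ n ∈ K → w⁻¹ * x * w ∈ K)
    {g : G} (hg : ∃ w : G, ∃ x ∈ K, g = w * x * w⁻¹) {v : G ⧸ K} (hv : g ^ n • v = v) :
    g • v = v := by
  obtain ⟨z, rfl⟩ := QuotientGroup.mk_surjective v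
  obtain ⟨w, x, hx, rfl⟩ := hg
  have hconj : z⁻¹ * (w * x * w⁻¹) * z = (w⁻¹ * z)⁻¹ * x * (w⁻¹ * z) := by group
  rw [zpow_smul_mk_eq_mk_iff, hconj] at hv
  rw [← zpow_one (w * x * w⁻¹), zpow_smul_mk_eq_mk_iff, hconj, zpow_one]
  exact hK _ x hx hv

end QuotientAction

theorem zpow_sub_smul_eq_self {G α : Type*} [Group G] [MulAction G α] {g : G} {a : α} {i j : ℤ}
    (h : g ^ i • a = g ^ j • a) : g ^ (i - j) • a = a := by
  rw [sub_eq_neg_add, zpow_add, mul_smul, h, ← mul_smul, ← zpow_add, neg_add_cancel, zpow_zero,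
    one_smul]

namespace HNNExtension

theorem inv_t_mul_of_mul_t_mem_range_iff {G : Type*} [Group G] {A B : Subgroup G} {φ : A ≃* B}
    {g : G} : (t⁻¹ * of g * t : HNNExtension G A B φ) ∈ (of : G →* _).range ↔ g ∈ B := by
  refine ⟨fun h => ?_, fun hg => ?_⟩
  · by_contra hg
    let w : NormalWord.ReducedWord G A B := ⟨1, [(-1, g), (1, 1)], by simpa [toSubgroup] using hg⟩
    have hw : w.prod φ = t⁻¹ * of g * t := by simp [w, NormalWord.ReducedWord.prod]
    simpa [w] using ReducedWord.toList_eq_nil_of_mem_of_range φ w (hw ▸ h)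
  · rw [← equiv_symm_eq_conj (b := ⟨g, hg⟩)]
    exact ⟨_, rfl⟩

variable {H : Type*} [Group H] {B : Subgroup H} {φ : (⊤ : Subgroup H) ≃* B}

theorem t_pow_mul_mul_inv_mem_range (b : ℕ) {x : HNNExtension H ⊤ B φ}
    (hx : x ∈ (of : H →* _).range) : t ^ b * x * (t ^ b)⁻¹ ∈ (of : H →* _).range := by
  induction b generalizing x with
  | zero => simpa using hx
  | succ b ih =>
    obtain ⟨h, rfl⟩ := hx
    have hconj : (t * of h * t⁻¹ : HNNExtension H ⊤ B φ) ∈ (of : H →* _).range :=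
      ⟨_, equiv_eq_conj (a := ⟨h, Subgroup.mem_top h⟩)⟩
    convert ih hconj using 1
    group

theorem exists_eq_inv_t_pow_mul_of_mul_t_pow (w : HNNExtension H ⊤ B φ) :
    ∃ a b : ℕ, ∃ u : H, w = (t ^ a)⁻¹ * of u * t ^ b := by
  induction w using HNNExtension.induction_on with
  | of u => exact ⟨0, 0, u, by simp⟩
  | t => exact ⟨0, 1, 1, by simp⟩
  | mul x y hx hy =>
    obtain ⟨a₁, b₁, u₁, rfl⟩ := hx
    obtain ⟨a₂, b₂, u₂, rfl⟩ := hy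
    rcases le_total a₂ b₁ with h | h
    · obtain ⟨e, rfl⟩ := Nat.exists_eq_add_of_le h
      obtain ⟨u, hu⟩ := t_pow_mul_mul_inv_mem_range (φ := φ) e ⟨u₂, rfl⟩
      refine ⟨a₁, e + b₂, u₁ * u, ?_⟩
      rw [map_mul, hu, pow_add, pow_add]
      group
    · obtain ⟨e, rfl⟩ := Nat.exists_eq_add_of_le h
      obtain ⟨u, hu⟩ := t_pow_mul_mul_inv_mem_range (φ := φ) e ⟨u₁, rfl⟩
      refine ⟨e + a₁, b₂, u * u₂, ?_⟩
      rw [map_mul, hu, pow_add, pow_add]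
      group
  | inv x hx =>
    obtain ⟨a, b, u, rfl⟩ := hx
    exact ⟨b, a, u⁻¹, by rw [map_inv]; group⟩

theorem inv_t_pow_mul_mul_t_pow_mem_range_of_zpow_mem {n : ℤ}
    (hB : ∀ c : H, c ^ n ∈ B → c ∈ B) (a : ℕ) {x : HNNExtension H ⊤ B φ}
    (hx : x ∈ (of : H →* _).range) (h : ((t ^ a)⁻¹ * x * t ^ a) ^ n ∈ (of : H →* _).range) :
    (t ^ a)⁻¹ * x * t ^ a ∈ (of : H →* _).range := by
  induction a generalizing x with
  | zero => simpa using hx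
  | succ a ih =>
    obtain ⟨d, rfl⟩ := hx
    have hsplit : (t ^ (a + 1))⁻¹ * of d * t ^ (a + 1) =
        (t ^ a)⁻¹ * (t⁻¹ * of d * t : HNNExtension H ⊤ B φ) * t ^ a := by
      group
    rw [hsplit] at h ⊢
    have hdn : d ^ n ∈ B := by
      have h' := t_pow_mul_mul_inv_mem_range a h
      rw [inv_mul_mul_zpow] at h'
      rw [← inv_t_mul_of_mul_t_mem_range_iff (φ := φ), map_zpow, ← inv_mul_mul_zpow]
      simpa [mul_assoc] using h'
    exact ih (inv_t_mul_of_mul_t_mem_range_iff.2 (hB d hdn)) h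

theorem inv_mul_mul_mem_range_of_zpow_mem {n : ℤ} (hB : ∀ c : H, c ^ n ∈ B → c ∈ B)
    (w : HNNExtension H ⊤ B φ) {x : HNNExtension H ⊤ B φ} (hx : x ∈ (of : H →* _).range)
    (h : (w⁻¹ * x * w) ^ n ∈ (of : H →* _).range) : w⁻¹ * x * w ∈ (of : H →* _).range := by
  obtain ⟨b, a, u, rfl⟩ := exists_eq_inv_t_pow_mul_of_mul_t_pow w
  have hsplit : ((t ^ b)⁻¹ * of u * t ^ a)⁻¹ * x * ((t ^ b)⁻¹ * of u * t ^ a) =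
      (t ^ a)⁻¹ * ((of u)⁻¹ * (t ^ b * x * (t ^ b)⁻¹) * of u) * t ^ a := by
    group
  rw [hsplit] at h ⊢
  refine inv_t_pow_mul_mul_t_pow_mem_range_of_zpow_mem hB a ?_ h
  exact Subgroup.mul_mem _ (Subgroup.mul_mem _ (Subgroup.inv_mem _ ⟨u, rfl⟩)
    (t_pow_mul_mul_inv_mem_range b hx)) ⟨u, rfl⟩

end HNNExtension

open HNNExtension in
theorem hnn_elliptic_orbit_dichotomy_general {H : Type*} [Group H] (p k : ℕ)
    (hp : p.Prime) (hpk : p = 2 * k + 1)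
    (B : Subgroup H) [B.Normal] (hB : B.index = p) (θ : H ≃* B)
    (g : HNNExtension H ⊤ B (Subgroup.topEquiv.trans θ))
    (hg : ∃ (x : HNNExtension H ⊤ B (Subgroup.topEquiv.trans θ)) (h : H),
      g = x * HNNExtension.of h * x⁻¹)
    (v : HNNExtension H ⊤ B (Subgroup.topEquiv.trans θ) ⧸
      (HNNExtension.of : H →* HNNExtension H ⊤ B (Subgroup.topEquiv.trans θ)).range) :
    g • v = v ∨
      ∀ i j : ℤ, -(k : ℤ) ≤ i → i ≤ k → -(k : ℤ) ≤ j → j ≤ k →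
        g ^ i • v = g ^ j • v → i = j := by
  refine or_iff_not_imp_left.2 fun hgv i j hi hi' hj hj' hij => by_contra fun hne => hgv ?_
  have hcop : IsCoprime (i - j) B.index :=
    hB ▸ Int.isCoprime_of_natAbs_lt_prime hp (sub_ne_zero.2 hne) (by omega)
  obtain ⟨x, h, rfl⟩ := hg
  exact smul_eq_self_of_zpow_smul_eq_self
    (fun w _ => inv_mul_mul_mem_range_of_zpow_mem (fun _ => B.mem_of_zpow_mem_of_isCoprime hcop) w)
    ⟨x, of h, ⟨h, rfl⟩, rfl⟩ (zpow_sub_smul_eq_self hij)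

/-- Let `p = 2k+1` be an odd prime, `H` a group, `B` a normal subgroup
of `H` of index `p`, `θ : H → B` an isomorphism, and `G = H*_θ` the HNN extension (with
`A = H` and `B`). If `g ∈ G` is elliptic (i.e. conjugate into the image of `H` in `G`),
then for every left coset `vH ∈ G/H` either `g • vH = vH` or the `2k+1` cosets
`gʲ • vH`, `j = -k, …, k`, are pairwise distinct. -/
theorem hnn_elliptic_orbit_dichotomy {H : Type*} [Group H] (p k : ℕ)
    (hp : p.Prime) (hpk : p = 2 * k + 1) (hk : 1 ≤ k)
    (B : Subgroup H) [B.Normal] (hB : B.index = p) (θ : H ≃* B)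
    (g : HNNExtension H ⊤ B (Subgroup.topEquiv.trans θ))
    (hg : ∃ (x : HNNExtension H ⊤ B (Subgroup.topEquiv.trans θ)) (h : H),
      g = x * HNNExtension.of h * x⁻¹)
    (v : HNNExtension H ⊤ B (Subgroup.topEquiv.trans θ) ⧸
      (HNNExtension.of : H →* HNNExtension H ⊤ B (Subgroup.topEquiv.trans θ)).range) :
    g • v = v ∨
      ∀ i j : ℤ, -(k : ℤ) ≤ i → i ≤ k → -(k : ℤ) ≤ j → j ≤ k →
        g ^ i • v = g ^ j • v → i = j :=
  hnn_elliptic_orbit_dichotomy_general p k hp hpk B hB θ g hg v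
end

section
/- Let p ≥ 2 be an integer, let D = ⨁_{i∈ℕ} ℤ/pℤ with canonical generators a_0, a_1, a_2, …, let K ≤ D be the subgroup of elements whose coordinate at index 0 vanishes (the subgroup generated by a_1, a_2, …), and let f : D → K be the shift isomorphism determined by f(a_i) = a_{i+1}. Then the HNN extension D*_f of D relative to f (with associated subgroups A = D and B = K, where [D : K] = p) is isomorphic to the lamplighter group L_p. -/
/-!
Conjugation by the stable letter `t` acts on `D` as the shift `f`, so `t^i a_0 t^(-i) = a_i` for
`i ≥ 0`. Conjugating by further powers of `t` shows that the elements `t^i a_0 t^(-i)`, `i ∈ ℤ`,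
pairwise commute and have order dividing `p`; hence they define a shift-equivariant homomorphism
`⨁_{i∈ℤ} ℤ/pℤ → D*_f`, i.e. a homomorphism `L_p → D*_f` sending `t` to `t`. It is inverse to the
homomorphism `D*_f → L_p` that places `D` on the lamps at nonnegative positions.
-/

/-- The action of `ℤ` on `⨁_{i∈ℤ} ℤ/nℤ` by shifting coordinates. -/
noncomputable def lampShift (n : ℕ) :
    Multiplicative ℤ →* MulAut (Multiplicative (ℤ →₀ ZMod n)) :=
  zpowersHom _ (AddEquiv.toMultiplicative (Finsupp.domCongr (Equiv.addRight (1 : ℤ))))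

/-- The lamplighter group `L_n = (ℤ/nℤ) ≀ ℤ`, the restricted wreath product, i.e. the
semidirect product `(⨁_{i∈ℤ} ℤ/nℤ) ⋊ ℤ` where `ℤ` acts by shifting coordinates. -/
abbrev Lamplighter (n : ℕ) : Type :=
  SemidirectProduct (Multiplicative (ℤ →₀ ZMod n)) (Multiplicative ℤ) (lampShift n)

/-- The generator `a` of the lamplighter group: generator of the copy of `ℤ/nℤ` at
position `0`. -/
noncomputable def Lamplighter.a (n : ℕ) : Lamplighter n :=
  SemidirectProduct.inl (Multiplicative.ofAdd (Finsupp.single (0 : ℤ) (1 : ZMod n)))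

/-- The generator `t` of the lamplighter group: the generator of the acting `ℤ`. -/
noncomputable def Lamplighter.t (n : ℕ) : Lamplighter n :=
  SemidirectProduct.inr (Multiplicative.ofAdd (1 : ℤ))

/-- The base group `D = ⨁_{i∈ℕ} ℤ/pℤ`. -/
abbrev LampBase (p : ℕ) : Type := Multiplicative (ℕ →₀ ZMod p)

/-- The subgroup `K ≤ D` of elements whose coordinate at index `0` vanishes (the
subgroup generated by `a_1, a_2, …`). -/
noncomputable def lampK (p : ℕ) : Subgroup (LampBase p) :=
  AddSubgroup.toSubgroup (AddMonoidHom.ker (Finsupp.applyAddHom (0 : ℕ)))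

open Multiplicative Finsupp

theorem AddMonoidHom.ext_zmod {n : ℕ} {A : Type*} [AddGroup A] {F G : ZMod n →+ A}
    (h : F 1 = G 1) : F = G := by
  ext c
  obtain ⟨k, rfl⟩ := ZMod.intCast_surjective c
  rw [← zsmul_one, map_zsmul, map_zsmul, h]

theorem Finsupp.mulHom_ext_zmod {ι G : Type*} [Group G] {n : ℕ}
    {F F' : Multiplicative (ι →₀ ZMod n) →* G}
    (h : ∀ i, F (ofAdd (single i 1)) = F' (ofAdd (single i 1))) : F = F' :=
  AddMonoidHom.toMultiplicativeLeft.symm.injective <|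
    Finsupp.addHom_ext' fun i => AddMonoidHom.ext_zmod (h i)

namespace Finsupp

open scoped IsMulCommutative

variable {ι G : Type*} [Group G] (n : ℕ) (g : ι → G)
  (hcomm : ∀ i j, Commute (g i) (g j)) (hpow : ∀ i, g i ^ n = 1)

noncomputable def zmodLiftOfCommute : Multiplicative (ι →₀ ZMod n) →* G :=
  haveI : IsMulCommutative (Subgroup.closure (Set.range g)) :=
    Subgroup.isMulCommutative_closure <| by
      rintro _ ⟨i, rfl⟩ _ ⟨j, rfl⟩
      exact hcomm i j
  (Subgroup.closure (Set.range g)).subtype.comp <| AddMonoidHom.toMultiplicativeLeft <|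
    Finsupp.liftAddHom fun i => ZMod.lift n
      ⟨zmultiplesHom _ (Additive.ofMul ⟨g i, Subgroup.subset_closure ⟨i, rfl⟩⟩), by
        rw [zmultiplesHom_apply, ← ofMul_zpow]
        exact congrArg Additive.ofMul (Subtype.ext (by simpa using hpow i))⟩

@[simp]
theorem zmodLiftOfCommute_single_one (i : ι) :
    zmodLiftOfCommute n g hcomm hpow (ofAdd (single i 1)) = g i := by
  simp only [zmodLiftOfCommute, MonoidHom.coe_comp, Function.comp_apply,
    AddMonoidHom.toMultiplicativeLeft_apply_apply, toAdd_ofAdd, liftAddHom_apply_single]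
  rw [← Int.cast_one, ZMod.lift_coe, zmultiplesHom_apply, one_zsmul]
  rfl

end Finsupp

theorem lampShift_ofAdd_single (n : ℕ) (z j : ℤ) (c : ZMod n) :
    lampShift n (ofAdd z) (ofAdd (single j c)) = ofAdd (single (j + z) c) := by
  have shift_one (j : ℤ) : lampShift n (ofAdd 1) (ofAdd (single j c)) = ofAdd (single (j + 1) c) :=
    congrArg ofAdd (equivMapDomain_single _ _ _)
  have shift_neg_one (j : ℤ) :
      lampShift n (ofAdd (-1)) (ofAdd (single j c)) = ofAdd (single (j - 1) c) := by
    rw [ofAdd_neg, map_inv, MulAut.inv_def, MulEquiv.symm_apply_eq, shift_one, sub_add_cancel]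
  induction z using Int.induction_on generalizing j with
  | zero => simp
  | succ k ih =>
    rw [ofAdd_add, map_mul, MulAut.mul_apply, shift_one, ih]
    ring_nf
  | pred k ih =>
    rw [sub_eq_add_neg, ofAdd_add, map_mul, MulAut.mul_apply, shift_neg_one, ih]
    ring_nf

namespace Lamplighter

theorem t_zpow (n : ℕ) (z : ℤ) : t n ^ z = SemidirectProduct.inr (ofAdd z) := by
  rw [t, ← map_zpow, ← ofAdd_zsmul, zsmul_one, Int.cast_id]

theorem t_zpow_mul_inl_mul_t_zpow_neg (n : ℕ) (z : ℤ) (x : Multiplicative (ℤ →₀ ZMod n)) :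
    t n ^ z * SemidirectProduct.inl x * t n ^ (-z) =
      SemidirectProduct.inl (lampShift n (ofAdd z) x) := by
  rw [t_zpow, t_zpow, ofAdd_neg, SemidirectProduct.inl_aut]

end Lamplighter

theorem lampK_index (p : ℕ) : (lampK p).index = p := by
  have hsurj : Function.Surjective (Finsupp.applyAddHom (M := ZMod p) (0 : ℕ)) := fun c =>
    ⟨single 0 c, single_eq_same⟩
  rw [lampK, AddSubgroup.index_toSubgroup, AddSubgroup.index_ker,
    AddMonoidHom.range_eq_top.2 hsurj, AddSubgroup.card_top, Nat.card_zmod]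

noncomputable def lampBaseToInt (p : ℕ) : LampBase p →* Multiplicative (ℤ →₀ ZMod p) :=
  AddMonoidHom.toMultiplicative (mapDomain.addMonoidHom (Nat.cast : ℕ → ℤ))

theorem lampBaseToInt_single (p i : ℕ) (c : ZMod p) :
    lampBaseToInt p (ofAdd (single i c)) = ofAdd (single (i : ℤ) c) :=
  congrArg ofAdd (mapDomain_single (f := (Nat.cast : ℕ → ℤ)))

section ShiftHNN

variable {p : ℕ} (f : LampBase p ≃* lampK p)

abbrev ShiftHNN : Type := HNNExtension (LampBase p) ⊤ (lampK p) (Subgroup.topEquiv.trans f)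

open HNNExtension

noncomputable def ShiftHNN.lamp (i : ℤ) : ShiftHNN f :=
  t ^ i * of (ofAdd (single 0 1)) * t ^ (-i)

theorem ShiftHNN.t_zpow_mul_lamp_mul_t_zpow_neg (z i : ℤ) :
    (t : ShiftHNN f) ^ z * lamp f i * t ^ (-z) = lamp f (i + z) := by
  unfold lamp
  group

theorem ShiftHNN.t_mul_of_mul_t_inv (x : LampBase p) :
    (t : ShiftHNN f) * of x * t⁻¹ = of (f x : LampBase p) :=
  (equiv_eq_conj (φ := Subgroup.topEquiv.trans f) ⟨x, trivial⟩).symm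

theorem ShiftHNN.lamp_pow (i : ℤ) : lamp f i ^ p = 1 := by
  have : (ofAdd (single 0 1) : LampBase p) ^ p = 1 := by
    rw [← ofAdd_nsmul, smul_single, nsmul_one, ZMod.natCast_self, single_zero, ofAdd_zero]
  rw [lamp, zpow_neg, conj_pow, ← map_pow, this, map_one, mul_one, mul_inv_cancel]

variable {f}
variable (hf : ∀ i : ℕ,
  ((f (Multiplicative.ofAdd (Finsupp.single i (1 : ZMod p)))) : LampBase p) =
    Multiplicative.ofAdd (Finsupp.single (i + 1) (1 : ZMod p)))
include hf

theorem ShiftHNN.lamp_natCast (d : ℕ) : lamp f d = of (ofAdd (single d 1)) := by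
  induction d with
  | zero => simp [lamp]
  | succ d ih =>
    rw [Nat.cast_succ, ← t_zpow_mul_lamp_mul_t_zpow_neg, ih, zpow_one, zpow_neg_one,
      t_mul_of_mul_t_inv, hf d]

theorem ShiftHNN.lamp_commute (i j : ℤ) : Commute (lamp f i) (lamp f j) := by
  wlog hij : i ≤ j generalizing i j
  · exact (this j i (le_of_not_ge hij)).symm
  obtain ⟨d, rfl⟩ : ∃ d : ℕ, j = i + d := ⟨(j - i).toNat, by omega⟩
  have conj_lamp (k : ℤ) : lamp f (k + i) = t ^ i * lamp f k * (t ^ i)⁻¹ := by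
    rw [← zpow_neg, t_zpow_mul_lamp_mul_t_zpow_neg]
  rw [← zero_add i, add_right_comm, conj_lamp, conj_lamp, zero_add, Commute.conj_iff,
    lamp_natCast hf d, ← Nat.cast_zero, lamp_natCast hf 0]
  exact (Commute.all _ _).map of

theorem lampBaseToInt_shift (x : LampBase p) :
    lampBaseToInt p (f x) = lampShift p (ofAdd 1) (lampBaseToInt p x) := by
  have key : (lampBaseToInt p).comp ((lampK p).subtype.comp f.toMonoidHom) =
      (lampShift p (ofAdd 1)).toMonoidHom.comp (lampBaseToInt p) :=
    mulHom_ext_zmod fun i => by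
      simp only [MonoidHom.comp_apply, MulEquiv.coe_toMonoidHom, Subgroup.coe_subtype, hf i,
        lampBaseToInt_single, lampShift_ofAdd_single, Nat.cast_succ]
  exact DFunLike.congr_fun key x

noncomputable def ShiftHNN.toLamplighter : ShiftHNN f →* Lamplighter p :=
  lift (SemidirectProduct.inl.comp (lampBaseToInt p)) (Lamplighter.t p) fun ⟨x, _⟩ => by
    rw [← mul_inv_eq_iff_eq_mul, ← zpow_one (Lamplighter.t p), ← zpow_neg]
    simp only [MonoidHom.comp_apply, Lamplighter.t_zpow_mul_inl_mul_t_zpow_neg]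
    exact congrArg _ (lampBaseToInt_shift hf x).symm

noncomputable def ShiftHNN.ofLamplighter : Lamplighter p →* ShiftHNN f :=
  SemidirectProduct.lift (zmodLiftOfCommute p (lamp f) (lamp_commute hf) (lamp_pow f))
    (zpowersHom _ t) fun g => mulHom_ext_zmod fun i => by
      simp only [MonoidHom.comp_apply, MulEquiv.coe_toMonoidHom, MulAut.conj_apply,
        zpowersHom_apply, ← zpow_neg]
      rw [← ofAdd_toAdd g, lampShift_ofAdd_single, zmodLiftOfCommute_single_one,
        zmodLiftOfCommute_single_one, t_zpow_mul_lamp_mul_t_zpow_neg, toAdd_ofAdd]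

theorem ShiftHNN.toLamplighter_lamp (i : ℤ) :
    toLamplighter hf (lamp f i) = SemidirectProduct.inl (ofAdd (single i 1)) := by
  rw [lamp, map_mul, map_mul, map_zpow, map_zpow, toLamplighter, lift_t, lift_of,
    MonoidHom.comp_apply, lampBaseToInt_single, Nat.cast_zero,
    Lamplighter.t_zpow_mul_inl_mul_t_zpow_neg, lampShift_ofAdd_single, zero_add]

theorem ShiftHNN.ofLamplighter_comp_toLamplighter :
    (ofLamplighter hf).comp (toLamplighter hf) = MonoidHom.id (ShiftHNN f) := by
  refine hom_ext (mulHom_ext_zmod fun i => ?_) ?_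
  · simp [toLamplighter, ofLamplighter, lampBaseToInt_single, lamp_natCast hf]
  · simp [toLamplighter, ofLamplighter, Lamplighter.t]

theorem ShiftHNN.toLamplighter_comp_ofLamplighter :
    (toLamplighter hf).comp (ofLamplighter hf) = MonoidHom.id (Lamplighter p) := by
  refine SemidirectProduct.hom_ext (mulHom_ext_zmod fun i => ?_) (MonoidHom.ext_mint ?_)
  · simp [ofLamplighter, toLamplighter_lamp]
  · simp [toLamplighter, ofLamplighter, Lamplighter.t]

noncomputable def ShiftHNN.mulEquivLamplighter : ShiftHNN f ≃* Lamplighter p :=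
  (toLamplighter hf).toMulEquiv (ofLamplighter hf) (ofLamplighter_comp_toLamplighter hf)
    (toLamplighter_comp_ofLamplighter hf)

end ShiftHNN

theorem hnn_of_shift_iso_lamplighter_general (p : ℕ) (f : LampBase p ≃* lampK p)
    (hf : ∀ i : ℕ,
      ((f (Multiplicative.ofAdd (Finsupp.single i (1 : ZMod p)))) : LampBase p) =
        Multiplicative.ofAdd (Finsupp.single (i + 1) (1 : ZMod p))) :
    (lampK p).index = p ∧
      Nonempty (HNNExtension (LampBase p) ⊤ (lampK p) (Subgroup.topEquiv.trans f) ≃*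
        Lamplighter p) :=
  ⟨lampK_index p, ⟨ShiftHNN.mulEquivLamplighter hf⟩⟩

/-- Let `p ≥ 2`, `D = ⨁_{i∈ℕ} ℤ/pℤ` with canonical generators
`a_0, a_1, …`, `K ≤ D` the subgroup of elements vanishing at index `0`, and
`f : D → K` the shift isomorphism determined by `f(a_i) = a_{i+1}`. Then `[D : K] = p`
and the HNN extension `D*_f` (with `A = D` and `B = K`) is isomorphic to the
lamplighter group `L_p`. -/
theorem hnn_of_shift_iso_lamplighter (p : ℕ) (hp : 2 ≤ p) (f : LampBase p ≃* lampK p)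
    (hf : ∀ i : ℕ,
      ((f (Multiplicative.ofAdd (Finsupp.single i (1 : ZMod p)))) : LampBase p) =
        Multiplicative.ofAdd (Finsupp.single (i + 1) (1 : ZMod p))) :
    (lampK p).index = p ∧
      Nonempty (HNNExtension (LampBase p) ⊤ (lampK p) (Subgroup.topEquiv.trans f) ≃*
        Lamplighter p) :=
  hnn_of_shift_iso_lamplighter_general p f hf
end

section
/- Let G be a group generated by a finite set S, and suppose x_1, …, x_r are nontrivial elements of G that freely generate a free monoid inside G. Set ℓ_i = ℓ_{G,S}(x_i) for i = 1, …, r and m = max{ℓ_1, …, ℓ_r}. Then ω(G,S) is greater than or equal to the unique positive real root of the polynomial Q(z) = z^m − Σ_{i=1}^{r} z^{m−ℓ_i}. -/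
/-!
Words `w = i₁ ⋯ i_k` over the alphabet `Fin r` map injectively to `x_{i₁} ⋯ x_{i_k} ∈ G`, and a
word of weight `ℓ_{i₁} + ⋯ + ℓ_{i_k} ≤ n` lands in the ball of radius `n`. Splitting off the first
letter shows that the number `c(n)` of words of weight at most `n` satisfies
`c(n) ≥ ∑ᵢ c(n - ℓᵢ)`, so for `ρ ≥ 1` the root equation `ρ^m = ∑ᵢ ρ^(m - ℓᵢ)` gives
`ρ^n ≤ ρ^m c(n)` by induction (for `ρ ≤ 1` there is nothing to prove, as `ω ≥ 1`). Hence `F(n)^(1/n) ≥ ρ^(1 - m/n) → ρ`, where the limit `ω(G,S)` exists by Fekete's lemma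
because `log F` is subadditive.
-/

/-- Word length `ℓ_{G,S}(g)`: least `n` such that `g` is a product of `n` elements
of `S ∪ S⁻¹`. -/
noncomputable def wordLength {G : Type*} [Group G] (S : Set G) (g : G) : ℕ :=
  sInf {n | ∃ w : List G, w.length = n ∧ (∀ x ∈ w, x ∈ S ∨ x⁻¹ ∈ S) ∧ w.prod = g}

/-- Growth function `F_{G,S}(n)`: number of elements in the ball of radius `n`. -/
noncomputable def growthFun {G : Type*} [Group G] (S : Set G) (n : ℕ) : ℕ :=
  Set.ncard {g : G | wordLength S g ≤ n}

/-- Exponential growth rate `ω(G,S) = lim_{n→∞} F_{G,S}(n)^(1/n)`. -/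
noncomputable def growthRate {G : Type*} [Group G] (S : Set G) : ℝ :=
  Filter.limUnder Filter.atTop fun n : ℕ => (growthFun S n : ℝ) ^ ((1 : ℝ) / n)

/-- `S` generates the group `G`. -/
def Generates {G : Type*} [Group G] (S : Set G) : Prop := Subgroup.closure S = ⊤

/-- Minimal exponential growth rate `Ω(G) = inf {ω(G,S) : S finite generating set}`. -/
noncomputable def minGrowthRate (G : Type*) [Group G] : ℝ :=
  sInf {r : ℝ | ∃ S : Set G, S.Finite ∧ Generates S ∧ growthRate S = r}

open Filter Topology

section WordLength

variable {G : Type*} [Group G] {S : Set G}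

lemma exists_word_of_generates (hgen : Generates S) (g : G) :
    ∃ w : List G, (∀ y ∈ w, y ∈ S ∨ y⁻¹ ∈ S) ∧ w.prod = g := by
  have hg : g ∈ (Subgroup.closure S).toSubmonoid := (hgen : Subgroup.closure S = ⊤) ▸ trivial
  rw [Subgroup.closure_toSubmonoid] at hg
  exact Submonoid.exists_list_of_mem_closure hg

lemma wordLength_prod_le_length {w : List G} (hw : ∀ y ∈ w, y ∈ S ∨ y⁻¹ ∈ S) :
    wordLength S w.prod ≤ w.length :=
  Nat.sInf_le ⟨w, rfl, hw, rfl⟩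

lemma exists_word_length_eq_wordLength (hgen : Generates S) (g : G) :
    ∃ w : List G, w.length = wordLength S g ∧ (∀ y ∈ w, y ∈ S ∨ y⁻¹ ∈ S) ∧ w.prod = g := by
  obtain ⟨w, hw, rfl⟩ := exists_word_of_generates hgen g
  exact Nat.sInf_mem (s := {n | ∃ v : List G, v.length = n ∧ (∀ y ∈ v, y ∈ S ∨ y⁻¹ ∈ S) ∧
    v.prod = w.prod}) ⟨w.length, w, rfl, hw, rfl⟩

lemma wordLength_one : wordLength S (1 : G) = 0 :=
  Nat.eq_zero_of_le_zero (wordLength_prod_le_length (w := []) (by simp))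

lemma one_le_wordLength (hgen : Generates S) {g : G} (hg : g ≠ 1) : 1 ≤ wordLength S g := by
  obtain ⟨w, hlen, -, rfl⟩ := exists_word_length_eq_wordLength hgen g
  rw [← hlen, Nat.one_le_iff_ne_zero, Ne, List.length_eq_zero_iff]
  rintro rfl
  exact hg List.prod_nil

lemma wordLength_mul_le (hgen : Generates S) (g h : G) :
    wordLength S (g * h) ≤ wordLength S g + wordLength S h := by
  obtain ⟨v, hv, hvS, rfl⟩ := exists_word_length_eq_wordLength hgen g
  obtain ⟨w, hw, hwS, rfl⟩ := exists_word_length_eq_wordLength hgen h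
  rw [← hv, ← hw, ← List.prod_append, ← List.length_append]
  exact wordLength_prod_le_length fun y hy => (List.mem_append.1 hy).elim (hvS y) (hwS y)

lemma wordLength_list_prod_le (hgen : Generates S) (l : List G) :
    wordLength S l.prod ≤ (l.map (wordLength S)).sum := by
  induction l with
  | nil => simp [wordLength_one]
  | cons a l ih =>
    rw [List.prod_cons, List.map_cons, List.sum_cons]
    exact (wordLength_mul_le hgen a l.prod).trans (Nat.add_le_add_left ih _)

lemma finite_setOf_wordLength_le (hS : S.Finite) (hgen : Generates S) (n : ℕ) :
    {g : G | wordLength S g ≤ n}.Finite := by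
  have : Finite ↥(S ∪ S⁻¹) := (hS.union hS.inv).to_subtype
  refine ((List.finite_length_le _ n).image
    fun l : List ↥(S ∪ S⁻¹) => (l.map (↑)).prod).subset fun g hg => ?_
  obtain ⟨w, hlen, hw, rfl⟩ := exists_word_length_eq_wordLength hgen g
  have hwn : w.length ≤ n := hlen ▸ hg
  lift w to List ↥(S ∪ S⁻¹) using hw
  exact ⟨w, by simpa using hwn, rfl⟩

end WordLength

section GrowthRate

variable {G : Type*} [Group G] {S : Set G}

lemma one_le_growthFun (hS : S.Finite) (hgen : Generates S) (n : ℕ) : 1 ≤ growthFun S n :=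
  (Set.ncard_pos (finite_setOf_wordLength_le hS hgen n)).2 ⟨1, by simp [wordLength_one]⟩

lemma growthFun_add_le (hS : S.Finite) (hgen : Generates S) (a b : ℕ) :
    growthFun S (a + b) ≤ growthFun S a * growthFun S b := by
  have hfin := finite_setOf_wordLength_le hS hgen
  have hsub : {g : G | wordLength S g ≤ a + b} ⊆ (fun p : G × G => p.1 * p.2) ''
      ({g | wordLength S g ≤ a} ×ˢ {g | wordLength S g ≤ b}) := by
    intro g hg
    obtain ⟨w, hlen, hw, rfl⟩ := exists_word_length_eq_wordLength hgen g
    refine ⟨((w.take a).prod, (w.drop a).prod), ⟨?_, ?_⟩, by simp [← List.prod_append]⟩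
    · exact (wordLength_prod_le_length fun y hy => hw y (List.mem_of_mem_take hy)).trans
        (by simp)
    · refine (wordLength_prod_le_length fun y hy => hw y (List.mem_of_mem_drop hy)).trans ?_
      have hwab : w.length ≤ a + b := hlen ▸ hg
      simp only [List.length_drop]
      omega
  calc growthFun S (a + b) ≤ _ := Set.ncard_le_ncard hsub (((hfin a).prod (hfin b)).image _)
    _ ≤ _ := Set.ncard_image_le ((hfin a).prod (hfin b))
    _ = growthFun S a * growthFun S b := Set.ncard_prod

lemma subadditive_log_growthFun (hS : S.Finite) (hgen : Generates S) :
    Subadditive fun n => Real.log (growthFun S n) := fun a b => by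
  have hpos (n : ℕ) : (0 : ℝ) < growthFun S n := by exact_mod_cast one_le_growthFun hS hgen n
  rw [← Real.log_mul (hpos a).ne' (hpos b).ne']
  exact Real.log_le_log (hpos _) (by exact_mod_cast growthFun_add_le hS hgen a b)

lemma tendsto_growthFun_rpow (hS : S.Finite) (hgen : Generates S) :
    Tendsto (fun n : ℕ => (growthFun S n : ℝ) ^ ((1 : ℝ) / n)) atTop (𝓝 (growthRate S)) := by
  have hone (n : ℕ) : (1 : ℝ) ≤ growthFun S n := by exact_mod_cast one_le_growthFun hS hgen n
  have hsub := subadditive_log_growthFun hS hgen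
  have hbdd : BddBelow (Set.range fun n : ℕ => Real.log (growthFun S n) / n) :=
    ⟨0, Set.forall_mem_range.2 fun n => div_nonneg (Real.log_nonneg (hone n)) n.cast_nonneg⟩
  have h : Tendsto (fun n : ℕ => (growthFun S n : ℝ) ^ ((1 : ℝ) / n)) atTop
      (𝓝 (Real.exp hsub.lim)) := by
    refine ((Real.continuous_exp.tendsto _).comp (hsub.tendsto_lim hbdd)).congr fun n => ?_
    simp [Real.rpow_def_of_pos (zero_lt_one.trans_le (hone n)), div_eq_mul_inv]
  rwa [growthRate, h.limUnder_eq]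

lemma one_le_growthRate (hS : S.Finite) (hgen : Generates S) : 1 ≤ growthRate S :=
  ge_of_tendsto' (tendsto_growthFun_rpow hS hgen) fun n =>
    Real.one_le_rpow (by exact_mod_cast one_le_growthFun hS hgen n) (by positivity)

lemma le_growthRate_of_pow_le_mul (hS : S.Finite) (hgen : Generates S) {ρ C : ℝ} (hρ : 0 ≤ ρ)
    (hC : 0 < C) (h : ∀ n, ρ ^ n ≤ C * growthFun S n) : ρ ≤ growthRate S := by
  have hlim : Tendsto (fun n : ℕ => ρ / C ^ ((1 : ℝ) / n)) atTop (𝓝 ρ) := by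
    have : Tendsto (fun n : ℕ => C ^ ((1 : ℝ) / n)) atTop (𝓝 1) := by
      simpa using tendsto_const_nhds.rpow tendsto_one_div_atTop_nhds_zero_nat (Or.inl hC.ne')
    have h := (tendsto_const_nhds (x := ρ)).div this one_ne_zero
    rwa [div_one] at h
  refine le_of_tendsto_of_tendsto hlim (tendsto_growthFun_rpow hS hgen) ?_
  filter_upwards [eventually_ne_atTop 0] with n hn
  calc ρ / C ^ ((1 : ℝ) / n) = (ρ ^ n / C) ^ ((1 : ℝ) / n) := by
        rw [Real.div_rpow (by positivity) hC.le, one_div, Real.pow_rpow_inv_natCast hρ hn]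
    _ ≤ (growthFun S n : ℝ) ^ ((1 : ℝ) / n) := by
        gcongr
        rw [div_le_iff₀' hC]
        exact h n

end GrowthRate
section WeightedWords

variable {ι : Type*} {ℓ : ι → ℕ}

def wordsOfWeightLE (ℓ : ι → ℕ) (n : ℕ) : Set (List ι) := {w | (w.map ℓ).sum ≤ n}

@[simp]
lemma mem_wordsOfWeightLE {n : ℕ} {w : List ι} : w ∈ wordsOfWeightLE ℓ n ↔ (w.map ℓ).sum ≤ n :=
  Iff.rfl

lemma finite_wordsOfWeightLE [Finite ι] (hℓ : ∀ i, 1 ≤ ℓ i) (n : ℕ) :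
    (wordsOfWeightLE ℓ n).Finite := by
  refine (List.finite_length_le ι n).subset fun w hw => ?_
  have hlen : (w.map ℓ).length ≤ (w.map ℓ).sum :=
    List.length_le_sum_of_one_le _ fun k hk => by
      obtain ⟨i, -, rfl⟩ := List.mem_map.1 hk
      exact hℓ i
  exact (List.length_map ℓ ▸ hlen).trans hw

lemma one_le_ncard_wordsOfWeightLE [Finite ι] (hℓ : ∀ i, 1 ≤ ℓ i) (n : ℕ) :
    1 ≤ (wordsOfWeightLE ℓ n).ncard :=
  (Set.ncard_pos (finite_wordsOfWeightLE hℓ n)).2 ⟨[], by simp⟩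

lemma sum_ncard_wordsOfWeightLE_sub_le [Fintype ι] (hℓ : ∀ i, 1 ≤ ℓ i) {n : ℕ}
    (hn : ∀ i, ℓ i ≤ n) :
    ∑ i, (wordsOfWeightLE ℓ (n - ℓ i)).ncard ≤ (wordsOfWeightLE ℓ n).ncard := by
  have (k : ℕ) : Finite (wordsOfWeightLE ℓ k) := (finite_wordsOfWeightLE hℓ k).to_subtype
  let cons : (Σ i, wordsOfWeightLE ℓ (n - ℓ i)) → wordsOfWeightLE ℓ n := fun p =>
    ⟨p.1 :: p.2, by
      have := p.2.2
      have := hn p.1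
      simp only [mem_wordsOfWeightLE, List.map_cons, List.sum_cons] at *
      omega⟩
  have hcons : Function.Injective cons := by
    rintro ⟨i, v, _⟩ ⟨j, w, _⟩ h
    obtain ⟨rfl, rfl⟩ := List.cons_eq_cons.1 (congrArg Subtype.val h)
    rfl
  simpa only [Nat.card_coe_set_eq, Nat.card_sigma] using Nat.card_le_card_of_injective cons hcons

lemma pow_le_mul_ncard_wordsOfWeightLE [Fintype ι] (hℓ : ∀ i, 1 ≤ ℓ i) {ρ : ℝ} (hρ : 1 ≤ ρ)
    {m : ℕ} (hm : ∀ i, ℓ i ≤ m) (hroot : ρ ^ m = ∑ i, ρ ^ (m - ℓ i)) (n : ℕ) :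
    ρ ^ n ≤ ρ ^ m * (wordsOfWeightLE ℓ n).ncard := by
  induction n using Nat.strong_induction_on with
  | _ n ih =>
  rcases lt_or_ge n m with hnm | hmn
  · calc ρ ^ n ≤ ρ ^ m * 1 := by rw [mul_one]; exact pow_le_pow_right₀ hρ hnm.le
      _ ≤ _ := by gcongr; exact_mod_cast one_le_ncard_wordsOfWeightLE hℓ n
  · have hn (i : ι) : ℓ i ≤ n := (hm i).trans hmn
    calc ρ ^ n = ρ ^ (n - m) * ρ ^ m := by rw [← pow_add, Nat.sub_add_cancel hmn]
      _ = ∑ i, ρ ^ (n - ℓ i) := by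
          rw [hroot, Finset.mul_sum]
          refine Finset.sum_congr rfl fun i _ => ?_
          rw [← pow_add]
          have := hm i
          congr 1
          omega
      _ ≤ ∑ i, ρ ^ m * (wordsOfWeightLE ℓ (n - ℓ i)).ncard :=
          Finset.sum_le_sum fun i _ => ih _ (by have := hℓ i; have := hn i; omega)
      _ ≤ ρ ^ m * (wordsOfWeightLE ℓ n).ncard := by
          rw [← Finset.mul_sum]
          gcongr
          exact_mod_cast sum_ncard_wordsOfWeightLE_sub_le hℓ hn

end WeightedWords

section FreeSubmonoid

variable {G : Type*} [Group G] {ι : Type*} {x : ι → G}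

lemma ne_one_of_injective_lift (hx : Function.Injective (FreeMonoid.lift x)) (i : ι) :
    x i ≠ 1 := fun h =>
  FreeMonoid.of_ne_one i (hx (by rw [FreeMonoid.lift_eval_of, h, map_one]))

lemma injective_prod_map_of_injective_lift (hx : Function.Injective (FreeMonoid.lift x)) :
    Function.Injective fun w : List ι => (w.map x).prod := fun v w h =>
  FreeMonoid.ofList.injective (hx (by simpa [FreeMonoid.lift_apply] using h))

lemma ncard_wordsOfWeightLE_le_growthFun {S : Set G} (hS : S.Finite) (hgen : Generates S)
    (hx : Function.Injective (FreeMonoid.lift x)) (n : ℕ) :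
    (wordsOfWeightLE (fun i => wordLength S (x i)) n).ncard ≤ growthFun S n := by
  rw [← Set.ncard_image_of_injective _ (injective_prod_map_of_injective_lift hx)]
  refine Set.ncard_le_ncard ?_ (finite_setOf_wordLength_le hS hgen n)
  rintro _ ⟨w, hw, rfl⟩
  exact (wordLength_list_prod_le hgen _).trans (by rw [List.map_map]; exact hw)

end FreeSubmonoid

theorem growth_rate_ge_root_of_free_submonoid_general {G : Type*} [Group G]
    (S : Set G) (hS : S.Finite) (hgen : Generates S)
    (r : ℕ) (x : Fin r → G)
    (hfree : Function.Injective (FreeMonoid.lift x))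
    (ρ : ℝ)
    (hroot : ρ ^ (Finset.univ.sup fun i => wordLength S (x i)) -
      ∑ i : Fin r,
        ρ ^ ((Finset.univ.sup fun j => wordLength S (x j)) - wordLength S (x i)) = 0) :
    ρ ≤ growthRate S := by
  rcases le_total ρ 1 with hρ | hρ
  · exact hρ.trans (one_le_growthRate hS hgen)
  set ℓ : Fin r → ℕ := fun i => wordLength S (x i)
  set m := Finset.univ.sup ℓ
  have hℓ (i : Fin r) : 1 ≤ ℓ i := one_le_wordLength hgen (ne_one_of_injective_lift hfree i)
  have hm (i : Fin r) : ℓ i ≤ m := Finset.le_sup (Finset.mem_univ i)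
  refine le_growthRate_of_pow_le_mul hS hgen (C := ρ ^ m) (by positivity) (by positivity) fun n => ?_
  calc ρ ^ n ≤ ρ ^ m * (wordsOfWeightLE ℓ n).ncard :=
        pow_le_mul_ncard_wordsOfWeightLE hℓ hρ hm (sub_eq_zero.1 hroot) n
    _ ≤ ρ ^ m * growthFun S n := by
        gcongr
        exact ncard_wordsOfWeightLE_le_growthFun hS hgen hfree n

/-- Let `G` be a group generated by a finite set `S`, and suppose
`x_1, …, x_r` are nontrivial elements of `G` freely generating a free monoid inside `G`.
Set `ℓ_i = ℓ_{G,S}(x_i)` and `m = max ℓ_i`. Then `ω(G,S)` is at least the unique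
positive root of `Q(z) = z^m - Σ_{i=1}^r z^(m - ℓ_i)`. -/
theorem growth_rate_ge_root_of_free_submonoid {G : Type*} [Group G]
    (S : Set G) (hS : S.Finite) (hgen : Generates S)
    (r : ℕ) (hr : 1 ≤ r) (x : Fin r → G) (hx : ∀ i, x i ≠ 1)
    (hfree : Function.Injective (FreeMonoid.lift x))
    (ρ : ℝ) (hρ : 0 < ρ)
    (hroot : ρ ^ (Finset.univ.sup fun i => wordLength S (x i)) -
      ∑ i : Fin r,
        ρ ^ ((Finset.univ.sup fun j => wordLength S (x j)) - wordLength S (x i)) = 0) :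
    ρ ≤ growthRate S :=
  growth_rate_ge_root_of_free_submonoid_general S hS hgen r x hfree ρ hroot
end

section
/- For every integer k ≥ 1 the inequalities (1+√5)/2 ≤ ω_k ≤ δ_k < 1 + √2 hold, where ω_k is the unique positive real root of T_k(x) = x^{k+1} − x^k − 2x^{k−1} − ⋯ − 2x − 2 and δ_k is the unique positive real root of D_k(x) = x^{2k+1} − 2x^{2k} − 2x^{2k−2} − ⋯ − 2x² − 2. -/
/-!
Multiplying out `(x - 1) T_k(x)` and `(x² - 1) D_k(x)` by the geometric sum formula gives
`2 - x^k q(x)` and `2 - x^(2k+1) q(x)` with `q(x) = 1 + 2x - x²`. Hence `q` is positive at both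
roots, which puts `δ_k` below the root `1 + √2` of `q`, and `ω_k^k q(ω_k) = 2` together with
`ω_k ≤ ω_k^k` forces `ω_k ≥ 2 > (1 + √5)/2`. Finally `D_k(ω_k) < 0`, and since `D_k(x) / x^(2k+1)`
is increasing on `(0, ∞)`, this places `ω_k` below `δ_k`.
-/

open Finset

theorem lt_of_pow_lt_sum_of_sum_le_pow {R ι : Type*} [CommRing R] [LinearOrder R]
    [IsStrictOrderedRing R] {s : Finset ι} {c : ι → R} {e : ι → ℕ} {n : ℕ} {x y : R}
    (hc : ∀ i ∈ s, 0 ≤ c i) (he : ∀ i ∈ s, e i ≤ n) (hy : 0 < y)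
    (hx : x ^ n < ∑ i ∈ s, c i * x ^ e i) (hy' : ∑ i ∈ s, c i * y ^ e i ≤ y ^ n) : x < y := by
  by_contra! hyx
  have hx0 : 0 ≤ x := hy.le.trans hyx
  have hterm : ∀ i ∈ s, c i * x ^ e i * y ^ n ≤ c i * y ^ e i * x ^ n := by
    intro i hi
    have hsplit : ∀ z : R, z ^ n = z ^ e i * z ^ (n - e i) := fun z => by
      rw [← pow_add, Nat.add_sub_cancel' (he i hi)]
    have hcoef : 0 ≤ c i * x ^ e i * y ^ e i :=
      mul_nonneg (mul_nonneg (hc i hi) (pow_nonneg hx0 _)) (pow_nonneg hy.le _)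
    calc c i * x ^ e i * y ^ n = c i * x ^ e i * y ^ e i * y ^ (n - e i) := by rw [hsplit y]; ring
      _ ≤ c i * x ^ e i * y ^ e i * x ^ (n - e i) :=
        mul_le_mul_of_nonneg_left (pow_le_pow_left₀ hy.le hyx _) hcoef
      _ = c i * y ^ e i * x ^ n := by rw [hsplit x]; ring
  have : x ^ n * y ^ n < y ^ n * x ^ n := calc
    x ^ n * y ^ n < (∑ i ∈ s, c i * x ^ e i) * y ^ n := mul_lt_mul_of_pos_right hx (pow_pos hy n)
    _ ≤ (∑ i ∈ s, c i * y ^ e i) * x ^ n := by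
      rw [sum_mul, sum_mul]
      exact sum_le_sum hterm
    _ ≤ y ^ n * x ^ n := mul_le_mul_of_nonneg_right hy' (pow_nonneg hx0 n)
  exact this.ne (mul_comm _ _)

def T (k : ℕ) (x : ℝ) : ℝ := x ^ (k + 1) - x ^ k - 2 * ∑ i ∈ range k, x ^ i

def D (k : ℕ) (x : ℝ) : ℝ := x ^ (2 * k + 1) - 2 * ∑ m ∈ range (k + 1), x ^ (2 * m)

theorem sub_one_mul_T (k : ℕ) (x : ℝ) :
    (x - 1) * T k x = 2 - x ^ k * (1 + 2 * x - x ^ 2) := by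
  unfold T
  linear_combination (-2) * geom_sum_mul x k

theorem sq_sub_one_mul_D (k : ℕ) (x : ℝ) :
    (x ^ 2 - 1) * D k x = 2 - x ^ (2 * k + 1) * (1 + 2 * x - x ^ 2) := by
  unfold D
  simp only [pow_mul]
  linear_combination (-2) * geom_sum_mul (x ^ 2) (k + 1)

theorem pow_mul_eq_two_of_T_eq_zero {k : ℕ} {x : ℝ} (h : T k x = 0) :
    x ^ k * (1 + 2 * x - x ^ 2) = 2 := by
  linear_combination sub_one_mul_T k x - (x - 1) * h

theorem pow_mul_eq_two_of_D_eq_zero {k : ℕ} {x : ℝ} (h : D k x = 0) :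
    x ^ (2 * k + 1) * (1 + 2 * x - x ^ 2) = 2 := by
  linear_combination sq_sub_one_mul_D k x - (x ^ 2 - 1) * h

theorem one_lt_of_T_eq_zero {k : ℕ} {x : ℝ} (hk : 1 ≤ k) (hx : 0 < x) (h : T k x = 0) :
    1 < x := by
  have hsum : 0 < ∑ i ∈ range k, x ^ i :=
    sum_pos (fun i _ => pow_pos hx i) (nonempty_range_iff.mpr (by omega))
  have hfactor : x ^ k * (x - 1) = 2 * ∑ i ∈ range k, x ^ i := by
    unfold T at h
    linear_combination h
  linarith [pos_of_mul_pos_right (hfactor ▸ mul_pos two_pos hsum) (pow_pos hx k).le]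

theorem two_le_of_pow_mul_eq_two {k : ℕ} {x : ℝ} (hk : 1 ≤ k) (hx : 1 < x)
    (h : x ^ k * (1 + 2 * x - x ^ 2) = 2) : 2 ≤ x := by
  have hq : 0 < 1 + 2 * x - x ^ 2 := pos_of_mul_pos_right (h ▸ two_pos) (pow_pos (by linarith) k).le
  have hxq : x * (1 + 2 * x - x ^ 2) ≤ 2 := calc
    _ ≤ x ^ k * (1 + 2 * x - x ^ 2) :=
      mul_le_mul_of_nonneg_right (le_self_pow₀ hx.le (by omega)) hq.le
    _ = 2 := h
  -- `2 - x q(x) = (x - 2)(x² - 1)`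
  nlinarith [mul_pos (sub_pos.2 hx) (show 0 < x + 1 by linarith)]

theorem D_neg_of_T_eq_zero {k : ℕ} {x : ℝ} (hx : 1 < x) (h : T k x = 0) : D k x < 0 := by
  have hprod : (x ^ 2 - 1) * D k x < 0 := by
    rw [sq_sub_one_mul_D, show 2 * k + 1 = (k + 1) + k by ring, pow_add, mul_assoc,
      pow_mul_eq_two_of_T_eq_zero h]
    linarith [one_lt_pow₀ (n := k + 1) hx (by omega)]
  exact neg_of_mul_neg_right hprod (by nlinarith)

theorem lt_one_add_sqrt_two_of_D_eq_zero {k : ℕ} {x : ℝ} (hx : 0 < x) (h : D k x = 0) :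
    x < 1 + √2 := by
  have hq : 0 < 1 + 2 * x - x ^ 2 :=
    pos_of_mul_pos_right ((pow_mul_eq_two_of_D_eq_zero h) ▸ two_pos) (pow_pos hx _).le
  linarith [Real.lt_sqrt_of_sq_lt (show (x - 1) ^ 2 < 2 by linarith)]

theorem lt_of_D_neg_of_D_eq_zero {k : ℕ} {x y : ℝ} (hy : 0 < y) (hDx : D k x < 0)
    (hDy : D k y = 0) : x < y := by
  unfold D at hDx hDy
  rw [mul_sum] at hDx hDy
  exact lt_of_pow_lt_sum_of_sum_le_pow (s := range (k + 1)) (e := fun m => 2 * m)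
    (n := 2 * k + 1) (fun _ _ => zero_le_two) (fun m hm => by have := mem_range.mp hm; omega)
    hy (by linarith) (by linarith)

/-- For every integer `k ≥ 1` the inequalities
`(1+√5)/2 ≤ ω_k ≤ δ_k < 1 + √2` hold, where `ω_k` is the unique positive real root of
`T_k(x) = x^(k+1) - x^k - 2(x^(k-1) + ⋯ + x + 1)` and `δ_k` is the unique positive real
root of `D_k(x) = x^(2k+1) - 2(x^(2k) + x^(2k-2) + ⋯ + x² + 1)`. -/
theorem omega_le_delta_lt (k : ℕ) (hk : 1 ≤ k) (ω δ : ℝ)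
    (hω : 0 < ω) (hωroot : ω ^ (k + 1) - ω ^ k - 2 * ∑ i ∈ Finset.range k, ω ^ i = 0)
    (hδ : 0 < δ)
    (hδroot : δ ^ (2 * k + 1) - 2 * ∑ m ∈ Finset.range (k + 1), δ ^ (2 * m) = 0) :
    (1 + Real.sqrt 5) / 2 ≤ ω ∧ ω ≤ δ ∧ δ < 1 + Real.sqrt 2 := by
  have hT : T k ω = 0 := hωroot
  have hD : D k δ = 0 := hδroot
  have hω1 : 1 < ω := one_lt_of_T_eq_zero hk hω hT
  have hω2 : 2 ≤ ω := two_le_of_pow_mul_eq_two hk hω1 (pow_mul_eq_two_of_T_eq_zero hT)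
  exact ⟨Real.goldenRatio_lt_two.le.trans hω2,
    (lt_of_D_neg_of_D_eq_zero hδ (D_neg_of_T_eq_zero hω1 hT) hD).le,
    lt_one_add_sqrt_two_of_D_eq_zero hδ hD⟩
end

section
/- The sequence (ω_k)_{k≥1} converges to 1 + √2 as k → ∞, where ω_k is the unique positive real root of T_k(x) = x^{k+1} − x^k − 2x^{k−1} − ⋯ − 2x − 2. -/
/-!
Multiplying `T_k(x)` by `x - 1` collapses the geometric sum: a root `w` satisfies
`w^k (2 - (w - 1)^2) = 2`. Hence `1 ≤ w < 1 + √2`, and factoring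
`2 - (w - 1)^2 = (1 + √2 - w)(w - 1 + √2)` gives `1 + √2 - w ≤ 2 / (w^k (w - 1))`.
Reading `T_k(w) = 0` as `w^k (w - 1) = 2 Σ_{i<k} w^i ≥ 2k` yields `1 + √2 - w ≤ 1 / k`.
-/

open Filter Finset Real

namespace OmegaRoot

def T {R : Type*} [CommRing R] (k : ℕ) (x : R) : R :=
  x ^ (k + 1) - x ^ k - 2 * ∑ i ∈ range k, x ^ i

section CommRing

variable {R : Type*} [CommRing R] {k : ℕ} {x : R}

theorem T_mul_sub_one (k : ℕ) (x : R) :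
    T k x * (x - 1) = x ^ k * ((x - 1) ^ 2 - 2) + 2 := by
  unfold T
  linear_combination (-2 : R) * geom_sum_mul x k

theorem pow_mul_two_sub_sq_eq_two (hT : T k x = 0) : x ^ k * (2 - (x - 1) ^ 2) = 2 := by
  linear_combination (1 - x) * hT + T_mul_sub_one k x

end CommRing

variable {k : ℕ} {w : ℝ}

theorem one_le_of_T_eq_zero (hw : 0 < w) (hT : T k w = 0) : 1 ≤ w := by
  have key := pow_mul_two_sub_sq_eq_two hT
  by_contra! hlt
  have hpow : w ^ k ≤ 1 := pow_le_one₀ hw.le hlt.le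
  nlinarith [pow_pos hw k, sq_pos_of_pos (sub_pos.2 hlt)]

theorem lt_one_add_sqrt_two_of_T_eq_zero (hw : 0 < w) (hT : T k w = 0) : w < 1 + √2 := by
  have hpos : 0 < 2 - (w - 1) ^ 2 :=
    pos_of_mul_pos_right ((pow_mul_two_sub_sq_eq_two hT).symm ▸ two_pos) (pow_pos hw k).le
  linarith [lt_sqrt_of_sq_lt (x := w - 1) (y := 2) (by linarith)]

theorem natCast_mul_one_add_sqrt_two_sub_le_one (hw : 0 < w) (hT : T k w = 0) :
    k * (1 + √2 - w) ≤ 1 := by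
  have h1 := one_le_of_T_eq_zero hw hT
  have hgap : 0 ≤ 1 + √2 - w := by linarith [lt_one_add_sqrt_two_of_T_eq_zero hw hT]
  have hsum : (k : ℝ) ≤ ∑ i ∈ range k, w ^ i := by
    simpa using card_nsmul_le_sum (range k) (w ^ ·) 1 fun i _ => one_le_pow₀ h1
  have hpow : w ^ k * (w - 1) = 2 * ∑ i ∈ range k, w ^ i := by
    unfold T at hT
    linear_combination hT
  have hfactor : (1 + √2 - w) * (w - 1 + √2) = 2 - (w - 1) ^ 2 := by
    linear_combination sq_sqrt (zero_le_two : (0 : ℝ) ≤ 2)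
  calc (k : ℝ) * (1 + √2 - w) ≤ (∑ i ∈ range k, w ^ i) * (1 + √2 - w) := by gcongr
    _ = w ^ k * (w - 1) * (1 + √2 - w) / 2 := by rw [hpow]; ring
    _ ≤ w ^ k * (w - 1 + √2) * (1 + √2 - w) / 2 := by gcongr; linarith [sqrt_nonneg 2]
    _ = 1 := by
      rw [mul_assoc, mul_comm (w - 1 + √2), hfactor, pow_mul_two_sub_sq_eq_two hT]
      norm_num

theorem dist_one_add_sqrt_two_le (hk : 0 < k) (hw : 0 < w) (hT : T k w = 0) :
    dist w (1 + √2) ≤ 1 / k := by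
  rw [dist_comm, Real.dist_eq, abs_of_nonneg (by linarith [lt_one_add_sqrt_two_of_T_eq_zero hw hT]),
    le_div_iff₀ (by positivity), mul_comm]
  exact natCast_mul_one_add_sqrt_two_sub_le_one hw hT

end OmegaRoot

/-- The sequence `(ω_k)_{k≥1}` converges to `1 + √2`, where `ω_k` is
the unique positive real root of `T_k(x) = x^(k+1) - x^k - 2(x^(k-1) + ⋯ + x + 1)`. -/
theorem omega_tendsto (ω : ℕ → ℝ)
    (h : ∀ k, 1 ≤ k → 0 < ω k ∧
      (ω k) ^ (k + 1) - (ω k) ^ k - 2 * ∑ i ∈ Finset.range k, (ω k) ^ i = 0) :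
    Filter.Tendsto ω Filter.atTop (nhds (1 + Real.sqrt 2)) := by
  rw [tendsto_iff_dist_tendsto_zero]
  refine squeeze_zero' (.of_forall fun _ => dist_nonneg) ?_ tendsto_one_div_atTop_nhds_zero_nat
  filter_upwards [eventually_ge_atTop 1] with k hk
  exact OmegaRoot.dist_one_add_sqrt_two_le hk (h k hk).1 (h k hk).2
end
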